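/- A finite loopless directed graph D is a central interval catch digraph (CICD) if and only if D is an optimized digraph. -/
import Mathlib


variable {V : Type*}

/-- An interval catch digraph representation: each vertex `u` gets an interval
`[a u, b u]` and a point `p u` inside it, and for distinct `u, v` there is an arc from
`u` to `v` iff `p v ∈ [a u, b u]`. -/
def IsICDRep (D : V → V → Prop) (a b p : V → ℝ) : Prop :=
  (∀ u, a u ≤ b u) ∧ (∀ u, p u ∈ Set.Icc (a u) (b u)) ∧
    ∀ u v : V, u ≠ v → (D u v ↔ p v ∈ Set.Icc (a u) (b u))

/-- An interval catch digraph. -/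
def IsICD (D : V → V → Prop) : Prop := ∃ a b p : V → ℝ, IsICDRep D a b p

/-- A central interval catch digraph: an ICD representation where every point is the
center of its interval. -/
def IsCICD (D : V → V → Prop) : Prop :=
  ∃ a b : V → ℝ, IsICDRep D a b (fun u => (a u + b u) / 2)

/-- An optimized digraph: vertices can be injectively labeled by reals so that from any
vertex, every out-neighbor is strictly closer (in label distance) than every
non-out-neighbor (other than the vertex itself). -/
def IsOptimizedDigraph (D : V → V → Prop) : Prop :=
  ∃ f : V → ℝ, Function.Injective f ∧
    ∀ u v w : V, D u v → w ≠ u → ¬ D u w → |f u - f v| < |f u - f w|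

/-- A finite loopless directed graph is a central interval catch digraph iff it is an
optimized digraph. -/
theorem cicd_iff_optimizedDigraph [Fintype V] (D : V → V → Prop)
    (hD : ∀ u, ¬ D u u) : IsCICD D ↔ IsOptimizedDigraph D := by
  classical
  constructor
  · rintro ⟨a, b, hab, hmem, harc⟩
    set n := Fintype.card V with hn
    set p : V → ℝ := fun u => (a u + b u) / 2 with hp
    have key1 : ∀ u v, D u v → |p v - p u| ≤ (b u - a u) / 2 := by
      intro u v huv
      have hne : u ≠ v := fun h => hD u (h ▸ huv)
      have h2 := (harc u v hne).mp huv
      simp only [Set.mem_Icc] at h2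
      rw [abs_le]
      simp only [hp] at h2 ⊢
      constructor <;> linarith [h2.1, h2.2]
    have key2 : ∀ u w, w ≠ u → ¬ D u w → (b u - a u) / 2 < |p w - p u| := by
      intro u w hwu hnd
      have h2 := (harc u w (Ne.symm hwu)).not.mp hnd
      simp only [Set.mem_Icc, not_and_or, not_le] at h2
      rcases h2 with h2 | h2 <;> rcases abs_cases (p w - p u) with ⟨h3, h4⟩ | ⟨h3, h4⟩ <;>
        simp only [hp] at * <;> linarith
    set gapf : V × V × V → ℝ := fun t =>
      if D t.1 t.2.1 ∧ t.2.2 ≠ t.1 ∧ ¬ D t.1 t.2.2 then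
        |p t.2.2 - p t.1| - |p t.2.1 - p t.1| else 1 with hgapf
    set S : Finset ℝ := insert 1 (Finset.univ.image gapf) with hS
    have hSne : S.Nonempty := ⟨1, Finset.mem_insert_self _ _⟩
    set δ := S.min' hSne with hδ
    have hδpos : 0 < δ := by
      have hmem' := S.min'_mem hSne
      rw [← hδ] at hmem'
      rw [hS, Finset.mem_insert] at hmem'
      rcases hmem' with h | h
      · rw [h]; norm_num
      · rw [Finset.mem_image] at h
        obtain ⟨t, -, ht⟩ := h
        rw [← ht, hgapf]
        dsimp only
        split_ifs with hcond
        · obtain ⟨h1, h2, h3⟩ := hcond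
          have := key1 t.1 t.2.1 h1
          have := key2 t.1 t.2.2 h2 h3
          linarith
        · norm_num
    set g : V → ℝ := fun u => ((Fintype.equivFin V u : ℕ) : ℝ) with hg
    have hginj : Function.Injective g := by
      intro u v h
      simp only [hg] at h
      exact (Fintype.equivFin V).injective (Fin.ext (Nat.cast_injective h))
    have hgb : ∀ x, 0 ≤ g x ∧ g x ≤ (n : ℝ) := by
      intro x
      refine ⟨by simp [hg], ?_⟩
      simp only [hg]
      exact_mod_cast Nat.le_of_lt (Fintype.equivFin V x).isLt
    set F : V × V → ℝ := fun q => (p q.1 - p q.2) / (g q.2 - g q.1) with hF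
    have hm : (0 : ℝ) < δ / (4 * ((n : ℝ) + 1)) := by positivity
    obtain ⟨c, ⟨hc0, hcm⟩, hcF⟩ :=
      ((Set.Ioo_infinite hm).diff (Set.finite_range F)).nonempty
    set f : V → ℝ := fun u => p u + c * g u with hf
    have hfinj : Function.Injective f := by
      intro u v h
      by_contra hne
      apply hcF
      have hgne : g v - g u ≠ 0 := sub_ne_zero.mpr fun h' => hne (hginj h'.symm)
      refine ⟨(u, v), ?_⟩
      simp only [hF]
      rw [div_eq_iff hgne]
      simp only [hf] at h
      linear_combination h
    refine ⟨f, hfinj, ?_⟩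
    intro u v w huv hwu hnw
    have hgap : δ ≤ |p w - p u| - |p v - p u| := by
      have hmem' : gapf (u, v, w) ∈ S :=
        Finset.mem_insert_of_mem (Finset.mem_image_of_mem _ (Finset.mem_univ _))
      have h := S.min'_le _ hmem'
      rw [← hδ] at h
      simpa [hgapf, huv, hwu, hnw] using h
    have hcn : c * ((n : ℝ) + 1) < δ / 4 := by
      have h4 : (0 : ℝ) < 4 * ((n : ℝ) + 1) := by positivity
      have := (lt_div_iff₀ (by positivity : (0 : ℝ) < 4 * ((n : ℝ) + 1))).mp hcm
      nlinarith
    have hguv : |g u - g v| ≤ (n : ℝ) := by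
      rw [abs_le]
      constructor <;> linarith [(hgb u).1, (hgb u).2, (hgb v).1, (hgb v).2]
    have hguw : |g u - g w| ≤ (n : ℝ) := by
      rw [abs_le]
      constructor <;> linarith [(hgb u).1, (hgb u).2, (hgb w).1, (hgb w).2]
    have h1 : |f u - f v| ≤ |p u - p v| + c * (n : ℝ) := by
      have he : f u - f v = (p u - p v) + c * (g u - g v) := by simp only [hf]; ring
      rw [he]
      calc |(p u - p v) + c * (g u - g v)| ≤ |p u - p v| + |c * (g u - g v)| := abs_add_le _ _
        _ ≤ |p u - p v| + c * (n : ℝ) := by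
            rw [abs_mul, abs_of_pos hc0]
            have := mul_le_mul_of_nonneg_left hguv (le_of_lt hc0)
            linarith
    have h2 : |p u - p w| - c * (n : ℝ) ≤ |f u - f w| := by
      have he : p u - p w = (f u - f w) - c * (g u - g w) := by simp only [hf]; ring
      have : |p u - p w| ≤ |f u - f w| + c * (n : ℝ) := by
        rw [he]
        calc |(f u - f w) - c * (g u - g w)| ≤ |f u - f w| + |c * (g u - g w)| :=
              abs_sub _ _
          _ ≤ |f u - f w| + c * (n : ℝ) := by
              rw [abs_mul, abs_of_pos hc0]
              have := mul_le_mul_of_nonneg_left hguw (le_of_lt hc0)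
              linarith
      linarith
    have hcn' : c * (n : ℝ) < δ / 4 := by
      have : c * (n : ℝ) ≤ c * ((n : ℝ) + 1) := by nlinarith
      linarith
    rw [abs_sub_comm (p w) (p u), abs_sub_comm (p v) (p u)] at hgap
    linarith
  · rintro ⟨f, hfinj, hopt⟩
    have hne : ∀ u : V, ((Finset.univ.image fun v => if D u v then |f u - f v| else 0)).Nonempty :=
      fun u => ⟨_, Finset.mem_image_of_mem _ (Finset.mem_univ u)⟩
    set r : V → ℝ := fun u =>
      ((Finset.univ.image fun v => if D u v then |f u - f v| else 0)).max' (hne u) with hr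
    have hr0 : ∀ u, 0 ≤ r u := by
      intro u
      have h0 : (0 : ℝ) ∈ Finset.univ.image fun v => if D u v then |f u - f v| else 0 := by
        have := Finset.mem_image_of_mem (fun v => if D u v then |f u - f v| else 0)
          (Finset.mem_univ u)
        simpa [hD u] using this
      exact Finset.le_max' _ _ h0
    have hrle : ∀ u v, D u v → |f u - f v| ≤ r u := by
      intro u v huv
      have h0 : |f u - f v| ∈ Finset.univ.image fun x => if D u x then |f u - f x| else 0 := by
        have := Finset.mem_image_of_mem (fun x => if D u x then |f u - f x| else 0)
          (Finset.mem_univ v)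
        simpa [huv] using this
      exact Finset.le_max' _ _ h0
    have hrlt : ∀ u w, w ≠ u → ¬ D u w → r u < |f u - f w| := by
      intro u w hwu hnd
      rw [hr]
      rw [Finset.max'_lt_iff]
      intro x hx
      rw [Finset.mem_image] at hx
      obtain ⟨v, -, hv⟩ := hx
      rw [← hv]
      split_ifs with hdv
      · exact hopt u v w hdv hwu hnd
      · rw [abs_pos]
        exact sub_ne_zero.mpr fun h => hwu (hfinj h).symm
    refine ⟨fun u => f u - r u, fun u => f u + r u, ?_, ?_, ?_⟩
    · intro u; dsimp only; linarith [hr0 u]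
    · intro u
      simp only [Set.mem_Icc]
      constructor <;> [linarith [hr0 u]; linarith [hr0 u]]
    · intro u v huv
      have hp' : ∀ x : V, (f x - r x + (f x + r x)) / 2 = f x := fun x => by ring
      simp only [Set.mem_Icc]
      rw [hp' v]
      constructor
      · intro h
        have h2 := hrle u v h
        rw [abs_le] at h2
        constructor <;> linarith [h2.1, h2.2]
      · rintro ⟨h1, h2⟩
        by_contra hnd
        have := hrlt u v (Ne.symm huv) hnd
        rcases abs_cases (f u - f v) with ⟨h3, -⟩ | ⟨h3, -⟩ <;> linarith
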